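/- Let Λ be an m×m real matrix with λ_{i,j} ≥ 0 for i ≠ j and λ_{i,i} = −Σ_{j≠i} λ_{i,j} (each row sums to zero), with rank Λ = m−1, and let p be a stationary probability vector (p_i ≥ 0, Σ_i p_i = 1, pᵀΛ = 0). Then for every z ∈ ℝ^m the linear system Λb = (pᵀz)𝟙 − z, where 𝟙 = (1,…,1)ᵀ, has a solution b ∈ ℝ^m. -/

import Mathlib

/-!
The stationary vector `p` annihilates the column space of `Λ`, since `p ⬝ᵥ Λ b = (p ᵥ* Λ) ⬝ᵥ b = 0`.
As `p ≠ 0`, the hyperplane `{w | p ⬝ᵥ w = 0}` has dimension `m - 1 = rank Λ`, so the column space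
is exactly that hyperplane; and `(p ⬝ᵥ z) 𝟙 - z` lies in it because `p ⬝ᵥ 𝟙 = 1`.
-/

namespace Matrix

variable {K m n : Type*} [Field K] [Fintype m] [Fintype n] [DecidableEq m]

theorem range_mulVecLin_le_ker_dotProduct {A : Matrix m n K} {p : m → K} (hpA : p ᵥ* A = 0) :
    LinearMap.range A.mulVecLin ≤ LinearMap.ker (dotProductEquiv K m p) := by
  rintro w ⟨b, rfl⟩
  simp [dotProduct_mulVec, hpA]

theorem finrank_ker_dotProduct {p : m → K} (hp : p ≠ 0) :
    Module.finrank K (LinearMap.ker (dotProductEquiv K m p)) = Fintype.card m - 1 := by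
  have hker := Module.Dual.finrank_ker_add_one_of_ne_zero
    ((LinearEquiv.map_ne_zero_iff (dotProductEquiv K m)).mpr hp)
  rw [Module.finrank_fintype_fun_eq_card] at hker
  omega

theorem range_mulVecLin_eq_ker_dotProduct {A : Matrix m n K} {p : m → K} (hp : p ≠ 0)
    (hpA : p ᵥ* A = 0) (hrank : A.rank = Fintype.card m - 1) :
    LinearMap.range A.mulVecLin = LinearMap.ker (dotProductEquiv K m p) :=
  Submodule.eq_of_le_of_finrank_eq (range_mulVecLin_le_ker_dotProduct hpA)
    (by rw [finrank_ker_dotProduct hp]; exact hrank)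

theorem exists_mulVec_eq_iff_dotProduct_eq_zero {A : Matrix m n K} {p : m → K} (hp : p ≠ 0)
    (hpA : p ᵥ* A = 0) (hrank : A.rank = Fintype.card m - 1) (w : m → K) :
    (∃ b, A *ᵥ b = w) ↔ p ⬝ᵥ w = 0 := by
  rw [← dotProductEquiv_apply_apply, ← LinearMap.mem_ker,
    ← range_mulVecLin_eq_ker_dotProduct hp hpA hrank, LinearMap.mem_range]
  simp only [mulVecLin_apply]

end Matrix

open Matrix Finset in
theorem stmt5_general (m : ℕ) (Λ : Matrix (Fin m) (Fin m) ℝ)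
    (hrank : Λ.rank = m - 1)
    (p : Fin m → ℝ) (hp1 : ∑ i, p i = 1)
    (hstat : p ᵥ* Λ = 0) :
    ∀ z : Fin m → ℝ, ∃ b : Fin m → ℝ,
      Λ *ᵥ b = (p ⬝ᵥ z) • (1 : Fin m → ℝ) - z := by
  intro z
  have hp : p ≠ 0 := by
    rintro rfl
    simp at hp1
  rw [exists_mulVec_eq_iff_dotProduct_eq_zero hp hstat (by rwa [Fintype.card_fin]),
    dotProduct_sub, dotProduct_smul, dotProduct_one, hp1, smul_eq_mul, mul_one, sub_self]

open Matrix Finset in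
/-- For an ergodic CTMC generator `Λ` (off-diagonal entries nonnegative, rows
summing to zero, rank `m - 1`) with stationary probability vector `p`, for every `z ∈ ℝ^m`
the linear system `Λ b = (pᵀz) 𝟙 - z` has a solution. -/
theorem stmt5 (m : ℕ) (Λ : Matrix (Fin m) (Fin m) ℝ)
    (hoff : ∀ i j : Fin m, i ≠ j → 0 ≤ Λ i j)
    (hdiag : ∀ i : Fin m, Λ i i = -∑ j ∈ univ \ {i}, Λ i j)
    (hrank : Λ.rank = m - 1)
    (p : Fin m → ℝ) (hp0 : ∀ i, 0 ≤ p i) (hp1 : ∑ i, p i = 1)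
    (hstat : p ᵥ* Λ = 0) :
    ∀ z : Fin m → ℝ, ∃ b : Fin m → ℝ,
      Λ *ᵥ b = (p ⬝ᵥ z) • (1 : Fin m → ℝ) - z :=
  stmt5_general m Λ hrank p hp1 hstat
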